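/- Sign structure on a half-period: if m ≥ 1 is an integer and s is a generalized sine function of order m, then s(x) > 0 for every x ∈ (0, π_m), s(π_m) = 0, s'(π_m) = −1, and s'(x) = 0 for x ∈ [0, π_m] exactly when x = π_m/2. -/

import Mathlib

/-- A generalized sine function of order `m ≥ 1`: a twice continuously differentiable
function `s : ℝ → ℝ` with `s'' = -m * s^(2m-1)`, `s 0 = 0` and `s' 0 = 1`. -/
def IsGenSine (m : ℕ) (s : ℝ → ℝ) : Prop :=
  ContDiff ℝ 2 s ∧ (∀ x : ℝ, deriv (deriv s) x = -(m : ℝ) * s x ^ (2 * m - 1)) ∧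
    s 0 = 0 ∧ deriv s 0 = 1

/-- The generalized half-period `π_m := 2 ∫₀¹ (1 - t^(2m))^(-1/2) dt`. -/
noncomputable def piGen (m : ℕ) : ℝ :=
  2 * ∫ t in (0:ℝ)..(1:ℝ), ((1 - t ^ (2 * m) : ℝ) ^ (-(1:ℝ)/2))

open Set MeasureTheory intervalIntegral Filter

namespace GenSineAux

open Finset in
lemma pow_sub_pow_abs_le {a b : ℝ} (n : ℕ) (ha : |a| ≤ 1) (hb : |b| ≤ 1) :
    |a ^ n - b ^ n| ≤ n * |a - b| := by
  rw [← geom_sum₂_mul, abs_mul]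
  gcongr ?_ * _
  calc |∑ i ∈ range n, a ^ i * b ^ (n - 1 - i)| ≤ ∑ i ∈ range n, |a ^ i * b ^ (n - 1 - i)| :=
        Finset.abs_sum_le_sum_abs _ _
    _ ≤ ∑ _i ∈ range n, 1 := by
        refine Finset.sum_le_sum fun i _ => ?_
        rw [abs_mul, abs_pow, abs_pow]
        exact mul_le_one₀ (pow_le_one₀ (abs_nonneg a) ha) (pow_nonneg (abs_nonneg b) _)
          (pow_le_one₀ (abs_nonneg b) hb)
    _ = n := by simp

lemma abs_eq_one_of_pow {m : ℕ} (hm : 1 ≤ m) {a : ℝ} (h : a ^ (2 * m) = 1) : |a| = 1 := by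
  have h2m : 2 * m ≠ 0 := by omega
  have habs : |a| ^ (2 * m) = 1 := by
    rw [← abs_pow, h, abs_one]
  rcases lt_trichotomy |a| 1 with hlt | heq | hgt
  · have := pow_lt_one₀ (abs_nonneg a) hlt h2m
    rw [habs] at this; linarith
  · exact heq
  · have := one_lt_pow₀ hgt h2m
    rw [habs] at this; linarith

/-- The integrand of `piGen`. -/
noncomputable def f (m : ℕ) (t : ℝ) : ℝ := (1 - t ^ (2 * m)) ^ (-(1:ℝ)/2)

/-- The incomplete integral. -/
noncomputable def F (m : ℕ) (y : ℝ) : ℝ := ∫ t in (0:ℝ)..y, f m t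

lemma f_nonneg (m : ℕ) {t : ℝ} (ht : t ∈ Icc (0:ℝ) 1) : 0 ≤ f m t := by
  have := pow_le_one₀ ht.1 ht.2 (n := 2 * m)
  exact Real.rpow_nonneg (by linarith) _

lemma f_meas (m : ℕ) : Measurable (f m) := by
  unfold f; measurability

lemma f_intable (m : ℕ) (hm : 1 ≤ m) : IntervalIntegrable (f m) volume 0 1 := by
  have hg : IntervalIntegrable (fun t : ℝ => (1 - t) ^ (-(1:ℝ)/2)) volume 0 1 := by
    have h := (intervalIntegrable_rpow' (a := 0) (b := 1) (r := -(1:ℝ)/2)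
      (by norm_num)).comp_sub_left 1
    simpa using h.symm
  rw [intervalIntegrable_iff_integrableOn_Ioc_of_le (by norm_num)] at hg ⊢
  refine Integrable.mono hg ((f_meas m).aestronglyMeasurable) ?_
  rw [ae_restrict_iff' measurableSet_Ioc]
  refine Filter.Eventually.of_forall fun t ht => ?_
  have ht0 : (0:ℝ) ≤ t := le_of_lt ht.1
  have ht1 : t ≤ 1 := ht.2
  have hfnn : 0 ≤ f m t := f_nonneg m ⟨ht0, ht1⟩
  rw [Real.norm_eq_abs, Real.norm_eq_abs, abs_of_nonneg hfnn,
    abs_of_nonneg (Real.rpow_nonneg (by linarith) _)]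
  rcases eq_or_lt_of_le ht1 with h1 | h1
  · subst h1
    simp [f, Real.zero_rpow (by norm_num : -(1:ℝ)/2 ≠ 0)]
  · have hlt : t ^ (2 * m) ≤ t := by
      calc t ^ (2 * m) ≤ t ^ 1 := pow_le_pow_of_le_one ht0 ht1 (by omega)
        _ = t := pow_one t
    exact Real.rpow_le_rpow_of_nonpos (by linarith) (by linarith) (by norm_num)

lemma f_intable_sub (m : ℕ) (hm : 1 ≤ m) {y : ℝ} (h0 : 0 ≤ y) (h1 : y ≤ 1) :
    IntervalIntegrable (f m) volume 0 y :=
  (f_intable m hm).mono_set (by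
    rw [uIcc_of_le h0, uIcc_of_le (by norm_num : (0:ℝ) ≤ 1)]
    exact Icc_subset_Icc le_rfl h1)

lemma F_zero (m : ℕ) : F m 0 = 0 := integral_same

lemma F_one (m : ℕ) : F m 1 = piGen m / 2 := by
  rw [piGen]; unfold F f; ring

lemma F_cont (m : ℕ) (hm : 1 ≤ m) : ContinuousOn (F m) (Icc 0 1) := by
  have := intervalIntegral.continuousOn_primitive_interval'
    (μ := volume) (b₁ := (0:ℝ)) (b₂ := 1) (a := 0) (f := f m) (f_intable m hm)
    (by rw [uIcc_of_le (by norm_num : (0:ℝ) ≤ 1)]; exact ⟨le_rfl, by norm_num⟩)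
  rwa [uIcc_of_le (by norm_num : (0:ℝ) ≤ 1)] at this

lemma F_hasDeriv (m : ℕ) (hm : 1 ≤ m) {y : ℝ} (h0 : 0 ≤ y) (h1 : y < 1) :
    HasDerivAt (F m) (f m y) y := by
  refine intervalIntegral.integral_hasDerivAt_right (f_intable_sub m hm h0 h1.le)
    ⟨Set.univ, Filter.univ_mem, by simpa using (f_meas m).aestronglyMeasurable⟩ ?_
  have hpos : 0 < 1 - y ^ (2 * m) := by
    have := pow_lt_one₀ h0 h1 (by omega : 2 * m ≠ 0)
    linarith
  exact ContinuousAt.rpow_const ((continuous_const.sub (continuous_pow (2 * m))).continuousAt)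
    (Or.inl (ne_of_gt hpos))

lemma F_le (m : ℕ) (hm : 1 ≤ m) {y : ℝ} (hy : y ∈ Icc (0:ℝ) 1) : F m y ≤ F m 1 := by
  have h1 : IntervalIntegrable (f m) volume 0 y := f_intable_sub m hm hy.1 hy.2
  have h2 : IntervalIntegrable (f m) volume y 1 := by
    refine (f_intable m hm).mono_set ?_
    rw [uIcc_of_le hy.2, uIcc_of_le (by norm_num : (0:ℝ) ≤ 1)]
    exact Icc_subset_Icc hy.1 le_rfl
  have : F m 1 = F m y + ∫ t in y..(1:ℝ), f m t :=
    (intervalIntegral.integral_add_adjacent_intervals h1 h2).symm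
  have hnn : 0 ≤ ∫ t in y..(1:ℝ), f m t :=
    intervalIntegral.integral_nonneg hy.2 (fun u hu => f_nonneg m ⟨le_trans hy.1 hu.1, hu.2⟩)
  linarith

section GenSine

variable {m : ℕ} {s : ℝ → ℝ}

lemma hasDeriv_s (hs : IsGenSine m s) : ∀ x, HasDerivAt s (deriv s x) x := fun x =>
  ((hs.1.differentiable (by norm_num)) x).hasDerivAt

lemma diff_deriv (hs : IsGenSine m s) : Differentiable ℝ (deriv s) := by
  have h2 : ContDiff ℝ ((1:ℕ) + 1) s := by exact_mod_cast hs.1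
  exact (contDiff_succ_iff_deriv.mp h2).2.2.differentiable (by simp)

lemma cont_deriv (hs : IsGenSine m s) : Continuous (deriv s) :=
  (diff_deriv hs).continuous

lemma hasDeriv_c (hs : IsGenSine m s) :
    ∀ x, HasDerivAt (deriv s) (-(m : ℝ) * s x ^ (2 * m - 1)) x := fun x => by
  have := ((diff_deriv hs) x).hasDerivAt
  rwa [hs.2.1 x] at this

lemma energy (hm : 1 ≤ m) (hs : IsGenSine m s) (x : ℝ) :
    deriv s x ^ 2 + s x ^ (2 * m) = 1 := by
  have hE : ∀ y : ℝ, HasDerivAt (fun y => deriv s y ^ 2 + s y ^ (2 * m)) 0 y := by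
    intro y
    have h1 := (hasDeriv_c hs y).pow 2
    have h2 := (hasDeriv_s hs y).pow (2 * m)
    have h3 := h1.add h2
    refine h3.congr_deriv ?_
    push_cast
    ring
  have hconst : (fun y => deriv s y ^ 2 + s y ^ (2 * m)) x
      = (fun y => deriv s y ^ 2 + s y ^ (2 * m)) 0 :=
    is_const_of_deriv_eq_zero (fun y => (hE y).differentiableAt)
      (fun y => (hE y).deriv) x 0
  simp only at hconst
  rw [hconst, hs.2.2.1, hs.2.2.2, zero_pow (by omega : 2 * m ≠ 0)]
  norm_num

lemma abs_s_le_one (hm : 1 ≤ m) (hs : IsGenSine m s) (x : ℝ) : |s x| ≤ 1 := by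
  have h := energy hm hs x
  have hnn : 0 ≤ s x ^ (2 * m) := by
    rw [mul_comm, pow_mul]; positivity
  have hle : s x ^ (2 * m) ≤ 1 := by nlinarith [sq_nonneg (deriv s x)]
  by_contra hgt
  push_neg at hgt
  have := one_lt_pow₀ hgt (by omega : 2 * m ≠ 0)
  rw [← abs_pow, abs_of_nonneg hnn] at this
  linarith

lemma abs_c_le_one (hm : 1 ≤ m) (hs : IsGenSine m s) (x : ℝ) : |deriv s x| ≤ 1 := by
  have h := energy hm hs x
  have hnn : 0 ≤ s x ^ (2 * m) := by rw [mul_comm, pow_mul]; positivity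
  have : deriv s x ^ 2 ≤ 1 := by linarith
  nlinarith [abs_nonneg (deriv s x), sq_abs (deriv s x)]

lemma s_lt_one_of_c_pos (hm : 1 ≤ m) (hs : IsGenSine m s) {x : ℝ}
    (hc : deriv s x ≠ 0) : s x < 1 := by
  have h := energy hm hs x
  have hc2 : 0 < deriv s x ^ 2 := by
    have := abs_pos.mpr hc
    nlinarith [sq_abs (deriv s x)]
  have hlt : s x ^ (2 * m) < 1 := by linarith
  by_contra hge
  push_neg at hge
  have : (1:ℝ) ≤ s x ^ (2 * m) := one_le_pow₀ hge
  linarith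

/-- While the derivative stays positive, `F (s x) = x`. -/
lemma F_comp_eq (hm : 1 ≤ m) (hs : IsGenSine m s) {b : ℝ} (hb : 0 ≤ b)
    (hpos : ∀ x ∈ Ico (0:ℝ) b, 0 < deriv s x) :
    ∀ x ∈ Icc (0:ℝ) b, F m (s x) = x := by
  have hconts : Continuous s := hs.1.continuous
  have hmono : StrictMonoOn s (Icc 0 b) := by
    refine strictMonoOn_of_deriv_pos (convex_Icc 0 b) hconts.continuousOn ?_
    intro x hx
    rw [interior_Icc] at hx
    exact hpos x ⟨hx.1.le, hx.2⟩
  have hs0 : s 0 = 0 := hs.2.2.1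
  have hs_nonneg : ∀ x ∈ Icc (0:ℝ) b, 0 ≤ s x := by
    intro x hx
    rcases eq_or_lt_of_le hx.1 with h | h
    · rw [← h, hs0]
    · have := hmono (left_mem_Icc.mpr hb) hx h
      rw [hs0] at this; exact this.le
  have hs_le : ∀ x, s x ≤ 1 := fun x => (abs_le.mp (abs_s_le_one hm hs x)).2
  -- H = F ∘ s - id is constant on [0, b]
  set H : ℝ → ℝ := fun x => F m (s x) - x with hH
  have hHc : ContinuousOn H (Icc 0 b) := by
    refine ContinuousOn.sub ?_ continuousOn_id
    refine (F_cont m hm).comp hconts.continuousOn ?_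
    exact fun x hx => ⟨hs_nonneg x hx, hs_le x⟩
  have hHd : ∀ x ∈ interior (Icc (0:ℝ) b), HasDerivAt H 0 x := by
    intro x hx
    rw [interior_Icc] at hx
    have hx' : x ∈ Ico (0:ℝ) b := ⟨hx.1.le, hx.2⟩
    have hcx : 0 < deriv s x := hpos x hx'
    have hsx1 : s x < 1 := s_lt_one_of_c_pos hm hs (ne_of_gt hcx)
    have hsx0 : 0 ≤ s x := hs_nonneg x ⟨hx.1.le, hx.2.le⟩
    have hFd := (F_hasDeriv m hm hsx0 hsx1).comp x (hasDeriv_s hs x)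
    have hval : f m (s x) * deriv s x = 1 := by
      have he := energy hm hs x
      have h1 : (1 : ℝ) - s x ^ (2 * m) = deriv s x ^ 2 := by linarith
      have h2 : f m (s x) = (deriv s x)⁻¹ := by
        rw [f, h1, ← Real.rpow_natCast (deriv s x) 2, ← Real.rpow_mul hcx.le]
        norm_num
        rw [Real.rpow_neg_one]
      rw [h2]
      field_simp
    have := hFd.sub (hasDerivAt_id x)
    rw [hval] at this
    simp only [sub_self] at this; exact this
  have hanti : AntitoneOn H (Icc 0 b) :=
    antitoneOn_of_deriv_nonpos (convex_Icc 0 b) hHc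
      (fun x hx => (hHd x hx).differentiableAt.differentiableWithinAt)
      (fun x hx => by rw [(hHd x hx).deriv])
  have hmono' : MonotoneOn H (Icc 0 b) :=
    monotoneOn_of_deriv_nonneg (convex_Icc 0 b) hHc
      (fun x hx => (hHd x hx).differentiableAt.differentiableWithinAt)
      (fun x hx => by rw [(hHd x hx).deriv])
  intro x hx
  have h0m : (0:ℝ) ∈ Icc (0:ℝ) b := left_mem_Icc.mpr hb
  have h1 : H x ≤ H 0 := hanti h0m hx hx.1
  have h2 : H 0 ≤ H x := hmono' h0m hx hx.1
  have hH0 : H 0 = 0 := by simp [hH, hs0, F_zero]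
  have : H x = 0 := le_antisymm (hH0 ▸ h1) (hH0 ▸ h2)
  simpa [hH, sub_eq_zero] using this

lemma c_pos_of_no_zero (hs : IsGenSine m s) {b : ℝ}
    (h : ∀ y ∈ Icc (0:ℝ) b, deriv s y ≠ 0) :
    ∀ x ∈ Icc (0:ℝ) b, 0 < deriv s x := by
  intro x hx
  rcases lt_trichotomy (deriv s x) 0 with hlt | heq | hgt
  · exfalso
    have hc0 : deriv s 0 = 1 := hs.2.2.2
    have hcont : ContinuousOn (deriv s) (Icc 0 x) := (cont_deriv hs).continuousOn
    have : (0:ℝ) ∈ Icc (deriv s x) (deriv s 0) := by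
      rw [hc0]; exact ⟨hlt.le, by norm_num⟩
    obtain ⟨y, hy, hy0⟩ := intermediate_value_Icc' hx.1 hcont this
    exact h y ⟨hy.1, le_trans hy.2 hx.2⟩ hy0
  · exact absurd heq (h x hx)
  · exact hgt

lemma exists_deriv_zero (hm : 1 ≤ m) (hs : IsGenSine m s) :
    ∃ x : ℝ, 0 ≤ x ∧ deriv s x = 0 := by
  by_contra h
  push_neg at h
  set b : ℝ := F m 1 + 1 with hbdef
  have hF1nn : 0 ≤ F m 1 := by
    refine intervalIntegral.integral_nonneg (by norm_num) ?_
    exact fun u hu => f_nonneg m hu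
  have hb : 0 ≤ b := by linarith
  have hpos : ∀ x ∈ Ico (0:ℝ) b, 0 < deriv s x :=
    fun x hx => c_pos_of_no_zero hs (fun y hy => h y hy.1) x ⟨hx.1, hx.2.le⟩
  have heq := F_comp_eq hm hs hb hpos b (right_mem_Icc.mpr hb)
  have hsb : s b ∈ Icc (0:ℝ) 1 := by
    constructor
    · have hmono : StrictMonoOn s (Icc 0 b) := by
        refine strictMonoOn_of_deriv_pos (convex_Icc 0 b) hs.1.continuous.continuousOn ?_
        intro x hx
        rw [interior_Icc] at hx
        exact hpos x ⟨hx.1.le, hx.2⟩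
      rcases eq_or_lt_of_le hb with h0 | h0
      · rw [← h0, hs.2.2.1]
      · have := hmono (left_mem_Icc.mpr hb) (right_mem_Icc.mpr hb) h0
        rw [hs.2.2.1] at this; exact this.le
    · exact (abs_le.mp (abs_s_le_one hm hs b)).2
  have := F_le m hm hsb
  rw [heq] at this
  rw [hbdef] at this
  linarith

/-- Symmetry around a critical point. -/
lemma symm_key (hm : 1 ≤ m) (hs : IsGenSine m s) {T : ℝ} (hT : deriv s T = 0) :
    ∀ x : ℝ, 0 ≤ x →
      s (T + x) = s (T - x) ∧ deriv s (T + x) = -deriv s (T - x) := by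
  set u : ℝ → ℝ := fun x => s (T + x) with hu_def
  set v : ℝ → ℝ := fun x => s (T - x) with hv_def
  set p : ℝ → ℝ := fun x => deriv s (T + x) with hp_def
  set q : ℝ → ℝ := fun x => -deriv s (T - x) with hq_def
  have hu : ∀ x, HasDerivAt u (p x) x := fun x => by
    have := (hasDeriv_s hs (T + x)).comp x ((hasDerivAt_id x).const_add T)
    simp only [mul_one] at this; exact this
  have hv : ∀ x, HasDerivAt v (q x) x := fun x => by
    have := (hasDeriv_s hs (T - x)).comp x ((hasDerivAt_id x).const_sub T)
    simp only [mul_neg, mul_one] at this; exact this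
  have hp : ∀ x, HasDerivAt p (-(m:ℝ) * u x ^ (2*m-1)) x := fun x => by
    have := (hasDeriv_c hs (T + x)).comp x ((hasDerivAt_id x).const_add T)
    simp only [mul_one] at this; exact this
  have hq : ∀ x, HasDerivAt q (-(-(m:ℝ) * v x ^ (2*m-1)) * (-1)) x := fun x => by
    have := ((hasDeriv_c hs (T - x)).comp x ((hasDerivAt_id x).const_sub T)).neg
    simp only [neg_mul] at this ⊢; exact this
  have hq' : ∀ x, HasDerivAt q (-(m:ℝ) * v x ^ (2*m-1)) x := fun x => by
    have := hq x; rwa [show -(-(m:ℝ) * v x ^ (2*m-1)) * (-1) = -(m:ℝ) * v x ^ (2*m-1) by ring]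
      at this
  -- the squared distance
  set w : ℝ → ℝ := fun x => (u x - v x)^2 + (p x - q x)^2 with hw_def
  set K : ℝ := 1 + (m : ℝ) * (2 * m) with hK_def
  have hW : ∀ x, HasDerivAt w
      (2 * (u x - v x)^1 * (p x - q x)
        + 2 * (p x - q x)^1 * ((-(m:ℝ) * u x ^ (2*m-1)) - (-(m:ℝ) * v x ^ (2*m-1)))) x :=
    fun x => (((hu x).sub (hv x)).pow 2).add (((hp x).sub (hq' x)).pow 2)
  have hWle : ∀ x, 2 * (u x - v x)^1 * (p x - q x)
        + 2 * (p x - q x)^1 * ((-(m:ℝ) * u x ^ (2*m-1)) - (-(m:ℝ) * v x ^ (2*m-1)))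
      ≤ K * w x := by
    intro x
    set a := u x - v x
    set bb := p x - q x
    have hau : |u x| ≤ 1 := abs_s_le_one hm hs (T + x)
    have hav : |v x| ≤ 1 := abs_s_le_one hm hs (T - x)
    have hD : |v x ^ (2*m-1) - u x ^ (2*m-1)| ≤ (2*m-1 : ℕ) * |v x - u x| :=
      pow_sub_pow_abs_le _ hav hau
    have hcast : ((2*m-1 : ℕ) : ℝ) ≤ 2 * m := by
      have h := Nat.cast_le (α := ℝ).mpr (show 2*m-1 ≤ 2*m by omega)
      push_cast at h
      linarith
    have hD' : |v x ^ (2*m-1) - u x ^ (2*m-1)| ≤ (2 * m) * |a| := by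
      have h1 : |v x - u x| = |a| := by rw [show v x - u x = -a by ring, abs_neg]
      calc |v x ^ (2*m-1) - u x ^ (2*m-1)| ≤ (2*m-1 : ℕ) * |v x - u x| := hD
        _ ≤ (2 * m) * |a| := by rw [h1]; exact mul_le_mul_of_nonneg_right hcast (abs_nonneg _)
    have h2ab : 2 * |a| * |bb| ≤ a^2 + bb^2 := by
      nlinarith [sq_nonneg (|a| - |bb|), sq_abs a, sq_abs bb]
    have habs1 : 2 * a^1 * bb ≤ 2 * |a| * |bb| := by
      rw [pow_one]
      calc 2 * a * bb ≤ |2 * a * bb| := le_abs_self _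
        _ = 2 * |a| * |bb| := by rw [abs_mul, abs_mul, abs_two]
    have habs2 : 2 * bb^1 * ((-(m:ℝ) * u x ^ (2*m-1)) - (-(m:ℝ) * v x ^ (2*m-1)))
        ≤ 2 * (m:ℝ) * (|bb| * ((2*m) * |a|)) := by
      rw [pow_one]
      have : (-(m:ℝ) * u x ^ (2*m-1)) - (-(m:ℝ) * v x ^ (2*m-1))
          = (m:ℝ) * (v x ^ (2*m-1) - u x ^ (2*m-1)) := by ring
      rw [this]
      calc 2 * bb * ((m:ℝ) * (v x ^ (2*m-1) - u x ^ (2*m-1)))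
          ≤ |2 * bb * ((m:ℝ) * (v x ^ (2*m-1) - u x ^ (2*m-1)))| := le_abs_self _
        _ = 2 * (m:ℝ) * (|bb| * |v x ^ (2*m-1) - u x ^ (2*m-1)|) := by
            rw [abs_mul, abs_mul, abs_mul, abs_two, abs_of_nonneg (by positivity : (0:ℝ) ≤ (m:ℝ))]
            ring
        _ ≤ 2 * (m:ℝ) * (|bb| * ((2*m) * |a|)) := by
            have hm0 : (0:ℝ) ≤ (m:ℝ) := by positivity
            have := mul_le_mul_of_nonneg_left hD' (abs_nonneg bb)
            nlinarith
    have hfin : 2 * (m:ℝ) * (|bb| * ((2*m) * |a|)) ≤ (m:ℝ) * (2*m) * (a^2 + bb^2) := by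
      have heq : 2 * (m:ℝ) * (|bb| * ((2*m) * |a|)) = (m:ℝ) * (2*m) * (2 * |a| * |bb|) := by
        ring
      rw [heq]
      exact mul_le_mul_of_nonneg_left h2ab (by positivity)
    have habs1' : 2 * a^1 * bb ≤ a^2 + bb^2 := le_trans habs1 h2ab
    have hwx : w x = a^2 + bb^2 := rfl
    rw [hK_def, hwx]
    nlinarith [habs1', le_trans habs2 hfin]
  -- the Gronwall function
  set g : ℝ → ℝ := fun x => w x * Real.exp (-K * x) with hg_def
  have hg : ∀ x, HasDerivAt g
      ((2 * (u x - v x)^1 * (p x - q x)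
        + 2 * (p x - q x)^1 * ((-(m:ℝ) * u x ^ (2*m-1)) - (-(m:ℝ) * v x ^ (2*m-1))))
        * Real.exp (-K * x) + w x * (Real.exp (-K * x) * (-K))) x := by
    intro x
    have hexp : HasDerivAt (fun x => Real.exp (-K * x)) (Real.exp (-K * x) * (-K)) x := by
      have hlin : HasDerivAt (fun y : ℝ => -K * y) (-K) x := by
        simpa using (hasDerivAt_id x).const_mul (-K)
      exact hlin.exp
    exact (hW x).mul hexp
  have hg_nonpos : ∀ x, deriv g x ≤ 0 := by
    intro x
    rw [(hg x).deriv]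
    have h1 := hWle x
    have hexp : 0 < Real.exp (-K * x) := Real.exp_pos _
    have hw_nonneg : 0 ≤ w x := by positivity
    nlinarith
  have hg_anti : Antitone g :=
    antitone_of_deriv_nonpos (fun x => (hg x).differentiableAt) hg_nonpos
  have hg0 : g 0 = 0 := by
    have hu0 : u 0 = v 0 := by simp [hu_def, hv_def]
    have hp0 : p 0 = 0 := by simp [hp_def, hT]
    have hq0 : q 0 = 0 := by simp [hq_def, hT]
    simp [hg_def, hw_def, hu0, hp0, hq0]
  intro x hx
  have hgx : g x ≤ 0 := hg0 ▸ hg_anti hx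
  have hw_nonneg : 0 ≤ w x := by positivity
  have hwx : w x = 0 := by
    have hexp : 0 < Real.exp (-K * x) := Real.exp_pos _
    rw [hg_def] at hgx
    simp only at hgx
    nlinarith
  have ha : u x - v x = 0 := by
    rw [hw_def] at hwx
    simp only at hwx
    nlinarith [sq_nonneg (u x - v x), sq_nonneg (p x - q x)]
  have hb : p x - q x = 0 := by
    rw [hw_def] at hwx
    simp only at hwx
    nlinarith [sq_nonneg (u x - v x), sq_nonneg (p x - q x)]
  constructor
  · have := sub_eq_zero.mp ha; exact this
  · have := sub_eq_zero.mp hb; simpa [hp_def, hq_def] using this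

end GenSine

end GenSineAux

open GenSineAux in
/-- sign structure on a half-period: `s > 0` on `(0, π_m)`,
`s(π_m) = 0`, `s'(π_m) = -1`, and on `[0, π_m]` the derivative vanishes exactly
at `π_m/2`. -/
theorem generalized_sine_sign_structure (m : ℕ) (hm : 1 ≤ m) (s : ℝ → ℝ)
    (hs : IsGenSine m s) :
    (∀ x ∈ Set.Ioo (0:ℝ) (piGen m), 0 < s x) ∧
    s (piGen m) = 0 ∧
    deriv s (piGen m) = -1 ∧
    (∀ x ∈ Set.Icc (0:ℝ) (piGen m), (deriv s x = 0 ↔ x = piGen m / 2)) := by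
  obtain ⟨hreg, hode, hs0, hc0⟩ := hs
  have hs' : IsGenSine m s := ⟨hreg, hode, hs0, hc0⟩
  -- the first zero of the derivative
  set A : Set ℝ := {x | 0 ≤ x ∧ deriv s x = 0} with hA_def
  have hA_closed : IsClosed A := by
    have : A = Set.Ici 0 ∩ (deriv s) ⁻¹' {0} := by
      ext x; simp [hA_def, Set.mem_Ici]
    rw [this]
    exact isClosed_Ici.inter (isClosed_singleton.preimage (cont_deriv hs'))
  have hA_ne : A.Nonempty := exists_deriv_zero hm hs'
  have hA_bdd : BddBelow A := ⟨0, fun x hx => hx.1⟩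
  set T : ℝ := sInf A with hT_def
  have hT_mem : T ∈ A := hA_closed.csInf_mem hA_ne hA_bdd
  have hT0 : 0 ≤ T := hT_mem.1
  have hcT : deriv s T = 0 := hT_mem.2
  have hT_pos : 0 < T := by
    rcases eq_or_lt_of_le hT0 with h | h
    · exfalso; rw [← h] at hcT; rw [hc0] at hcT; norm_num at hcT
    · exact h
  have hc_pos : ∀ x ∈ Set.Ico (0:ℝ) T, 0 < deriv s x := by
    intro x hx
    refine c_pos_of_no_zero hs' (b := x) ?_ x (Set.right_mem_Icc.mpr hx.1)
    intro y hy hy0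
    have : T ≤ y := csInf_le hA_bdd ⟨hy.1, hy0⟩
    have : y < T := lt_of_le_of_lt hy.2 hx.2
    linarith
  -- s is strictly increasing on [0, T]
  have hmonoT : StrictMonoOn s (Set.Icc 0 T) := by
    refine strictMonoOn_of_deriv_pos (convex_Icc 0 T) hreg.continuous.continuousOn ?_
    intro x hx
    rw [interior_Icc] at hx
    exact hc_pos x ⟨hx.1.le, hx.2⟩
  have hs_nonnegT : ∀ x ∈ Set.Icc (0:ℝ) T, 0 ≤ s x := by
    intro x hx
    rcases eq_or_lt_of_le hx.1 with h | h
    · rw [← h, hs0]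
    · have := hmonoT (Set.left_mem_Icc.mpr hT0) hx h
      rw [hs0] at this; exact this.le
  -- s T = 1
  have hsT : s T = 1 := by
    have he := energy hm hs' T
    have hpow : s T ^ (2 * m) = 1 := by rw [hcT] at he; nlinarith
    have habs : |s T| = 1 := abs_eq_one_of_pow hm hpow
    have hpos : 0 < s T := by
      have := hmonoT (Set.left_mem_Icc.mpr hT0) (Set.right_mem_Icc.mpr hT0) hT_pos
      rwa [hs0] at this
    rcases abs_cases (s T) with ⟨h1, _⟩ | ⟨h1, h2⟩
    · rw [← h1, habs]
    · linarith
  -- T = piGen m / 2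
  have hFT := F_comp_eq hm hs' hT0 hc_pos T (Set.right_mem_Icc.mpr hT0)
  have hT_eq : T = piGen m / 2 := by
    rw [hsT, F_one] at hFT
    linarith
  have hpi : piGen m = 2 * T := by linarith
  -- symmetry
  have hsym := symm_key hm hs' hcT
  have hsym_s : ∀ x ∈ Set.Icc T (2*T), s x = s (2*T - x) := by
    intro x hx
    have h1 := (hsym (x - T) (by linarith [hx.1])).1
    rw [show T + (x - T) = x by ring, show T - (x - T) = 2*T - x by ring] at h1
    exact h1
  have hsym_c : ∀ x ∈ Set.Icc T (2*T), deriv s x = -deriv s (2*T - x) := by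
    intro x hx
    have h1 := (hsym (x - T) (by linarith [hx.1])).2
    rw [show T + (x - T) = x by ring, show T - (x - T) = 2*T - x by ring] at h1
    exact h1
  -- positivity on (0, T]
  have hpos1 : ∀ x ∈ Set.Ioc (0:ℝ) T, 0 < s x := by
    intro x hx
    have := hmonoT (Set.left_mem_Icc.mpr hT0) ⟨hx.1.le, hx.2⟩ hx.1
    rwa [hs0] at this
  refine ⟨?_, ?_, ?_, ?_⟩
  · -- positivity on (0, piGen m)
    intro x hx
    rw [hpi] at hx
    rcases le_or_gt x T with h | h
    · exact hpos1 x ⟨hx.1, h⟩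
    · have h1 := hsym_s x ⟨h.le, hx.2.le⟩
      rw [h1]
      exact hpos1 (2*T - x) ⟨by linarith [hx.2], by linarith⟩
  · -- s (piGen m) = 0
    rw [hpi]
    have := hsym_s (2*T) ⟨by linarith, le_rfl⟩
    rw [this]
    simpa using hs0
  · -- deriv s (piGen m) = -1
    rw [hpi]
    have := hsym_c (2*T) ⟨by linarith, le_rfl⟩
    rw [this]
    simp [hc0]
  · -- the iff
    intro x hx
    rw [hpi] at hx
    rw [← hT_eq]
    constructor
    · intro hcx
      rcases le_or_gt x T with h | h
      · -- x ∈ [0, T]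
        have he := energy hm hs' x
        have hpow : s x ^ (2 * m) = 1 := by rw [hcx] at he; nlinarith
        have habs : |s x| = 1 := abs_eq_one_of_pow hm hpow
        have hsx_nonneg : 0 ≤ s x := hs_nonnegT x ⟨hx.1, h⟩
        have hsx1 : s x = 1 := by
          rcases abs_cases (s x) with ⟨h1, _⟩ | ⟨h1, h2⟩
          · rw [← h1, habs]
          · linarith
        exact hmonoT.injOn ⟨hx.1, h⟩ (Set.right_mem_Icc.mpr hT0) (by rw [hsx1, hsT])
      · -- x ∈ (T, 2T]: derivative is negative there, contradiction
        exfalso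
        have h1 := hsym_c x ⟨h.le, hx.2⟩
        have h2 : 2*T - x ∈ Set.Ico (0:ℝ) T := ⟨by linarith [hx.2], by linarith⟩
        have h3 := hc_pos _ h2
        rw [hcx] at h1
        linarith
    · intro hxT
      rw [hxT]
      exact hcT
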